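/- arXiv:2106.16242 — 2 statements merged into one kernel-verified Lean document; each statement's English description precedes it below -/
import Mathlib

section
/- Fix $n$, $0 < r < 1$ with $k = \lfloor rn \rfloor \geq 1$, and an integer $0 \leq \kappa \leq n - k$. Write $n - \kappa = p'k + q'$ with $0 \leq q' < k$. Then the maximum number of edges of a graph $G$ on $n$ vertices with $CO_v^r(G) = \kappa$ is $f(\kappa) = \kappa(n-\kappa) + \binom{\kappa}{2} + p'\binom{k}{2} + \binom{q'}{2}$, attained by the join of $K_\kappa$ with the disjoint union of $p'$ copies of $K_k$ and one copy of $K_{q'}$. -/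
open SimpleGraph

/-- A graph is in a *failure state* for threshold `k` if every connected
component has order at most `k`. -/
def failureState {V : Type*} (G : SimpleGraph V) (k : ℕ) : Prop :=
  ∀ v : V, (G.connectedComponentMk v).supp.ncard ≤ k

/-- `S` is a vertex disconnecting set: removing the vertices of `S` from `G`
leaves every component with at most `k` vertices. -/
def vertexDisconnects {V : Type*} (G : SimpleGraph V) (k : ℕ) (S : Set V) : Prop :=
  failureState (G.induce Sᶜ) k

/-- Component order proportion vertex connectivity: minimum size of a vertex
disconnecting set. -/
noncomputable def COv {V : Type*} (G : SimpleGraph V) (k : ℕ) : ℕ :=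
  sInf {c | ∃ S : Set V, S.ncard = c ∧ vertexDisconnects G k S}

/-- Component order proportion edge connectivity: minimum size of an edge
disconnecting set. -/
noncomputable def COe {V : Type*} (G : SimpleGraph V) (k : ℕ) : ℕ :=
  sInf {c | ∃ E' : Set (Sym2 V), E' ⊆ G.edgeSet ∧ E'.ncard = c ∧
    failureState (G.deleteEdges E') k}

/-- Minimum of `COv` over all graphs with `n` vertices and `m` edges. -/
noncomputable def gminV (n k m : ℕ) : ℕ :=
  sInf {c | ∃ G : SimpleGraph (Fin n), G.edgeSet.ncard = m ∧ COv G k = c}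

/-- Minimum of `COe` over all graphs with `n` vertices and `m` edges. -/
noncomputable def gminE (n k m : ℕ) : ℕ :=
  sInf {c | ∃ G : SimpleGraph (Fin n), G.edgeSet.ncard = m ∧ COe G k = c}

/-!
Let `T` be a minimum vertex disconnecting set of `G`, so `|T| = κ`. Every edge of `G` meets `T`
or lies inside a component of `G - T`, so `G` is a subgraph of the join of a clique on `T` with
disjoint cliques on these components, whose orders `tᵢ ≤ k` sum to `n - κ`. Since `C(·, 2)` is
convex, `∑ C(tᵢ, 2)` is largest when the `tᵢ` are packed greedily into blocks of size `k`, which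
gives the bound. The extremal graph attains it, and its `κ` cone vertices are adjacent to all
others, so removing fewer than `κ` vertices leaves one of them and hence a connected graph on more
than `n - κ ≥ k` vertices.
-/

open Finset

variable {V ι : Type*}

lemma Nat.two_mul_choose_two_add_self (x : ℕ) : 2 * x.choose 2 + x = x * x := by
  induction x with
  | zero => rfl
  | succ x ih => rw [Nat.choose_succ_succ', Nat.choose_one_right]; grind

lemma Nat.choose_two_add (a b : ℕ) : (a + b).choose 2 = a.choose 2 + b.choose 2 + a * b := by
  have := (a + b).two_mul_choose_two_add_self
  have := a.two_mul_choose_two_add_self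
  have := b.two_mul_choose_two_add_self
  nlinarith

/-- Moving vertices from a smaller clique into a larger one does not decrease the edge count. -/
lemma Nat.choose_two_add_choose_two_le {a b c d : ℕ} (h : a + b = c + d) (ha : a ≤ c)
    (hb : b ≤ c) : a.choose 2 + b.choose 2 ≤ c.choose 2 + d.choose 2 := by
  obtain ⟨x, rfl⟩ : ∃ x, a = d + x := ⟨a - d, by omega⟩
  obtain rfl : c = b + x := by omega
  have : d * x ≤ b * x := Nat.mul_le_mul_right x (by omega)
  rw [Nat.choose_two_add, Nat.choose_two_add]
  omega

/-- The number of edges of the disjoint union of `m / k` copies of `K_k` and one `K_(m % k)`. -/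
def packedEdges (k m : ℕ) : ℕ := m / k * k.choose 2 + (m % k).choose 2

lemma packedEdges_mul_add {k p q : ℕ} (hq : q < k) :
    packedEdges k (p * k + q) = p * k.choose 2 + q.choose 2 := by
  obtain ⟨hdiv, hmod⟩ :=
    (Nat.div_mod_unique (a := p * k + q) (d := p) (c := q) (by omega)).2 ⟨by ring, hq⟩
  rw [packedEdges, hdiv, hmod]

lemma choose_two_add_packedEdges_le {k a : ℕ} (m : ℕ) (ha : a ≤ k) :
    a.choose 2 + packedEdges k m ≤ packedEdges k (a + m) := by
  rcases Nat.eq_zero_or_pos k with rfl | hk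
  · obtain rfl : a = 0 := by omega
    simp [packedEdges]
  obtain ⟨p, q, hq, rfl⟩ : ∃ p q, q < k ∧ m = p * k + q :=
    ⟨m / k, m % k, Nat.mod_lt m hk, by rw [mul_comm, Nat.div_add_mod]⟩
  rw [packedEdges_mul_add hq]
  -- the `a` new vertices either fit into the partial block or complete it and start a new one
  rcases lt_or_ge (a + q) k with h | h
  · rw [show a + (p * k + q) = p * k + (a + q) by ring, packedEdges_mul_add h]
    have := Nat.choose_two_add_choose_two_le (d := 0) (add_zero _).symm (Nat.le_add_right a q)
      (Nat.le_add_left q a)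
    simp only [Nat.choose_zero_succ, add_zero] at this
    omega
  · rw [show a + (p * k + q) = (p + 1) * k + (a + q - k) by rw [add_mul]; omega,
      packedEdges_mul_add (by omega)]
    have := Nat.choose_two_add_choose_two_le (d := a + q - k) (by omega) ha hq.le
    rw [add_mul]
    omega

lemma sum_choose_two_le_packedEdges {k : ℕ} (s : Finset ι) {t : ι → ℕ}
    (ht : ∀ i ∈ s, t i ≤ k) : ∑ i ∈ s, (t i).choose 2 ≤ packedEdges k (∑ i ∈ s, t i) := by
  classical
  induction s using Finset.induction_on with
  | empty => simp
  | insert a s ha ih =>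
    rw [sum_insert ha, sum_insert ha]
    calc (t a).choose 2 + ∑ i ∈ s, (t i).choose 2
        ≤ (t a).choose 2 + packedEdges k (∑ i ∈ s, t i) := by
          gcongr
          exact ih fun i hi => ht i (mem_insert_of_mem hi)
      _ ≤ packedEdges k (t a + ∑ i ∈ s, t i) :=
          choose_two_add_packedEdges_le _ (ht a (mem_insert_self a s))

lemma ncard_setOf_eq_card_filter [Fintype V] (p : V → Prop) [DecidablePred p] :
    {v | p v}.ncard = #{v | p v} := by
  rw [Set.ncard_eq_toFinset_card', Set.toFinset_ofPred]

lemma card_eq_card_none_add_sum [Fintype V] [DecidableEq ι] [Fintype ι] (φ : V → Option ι) :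
    Fintype.card V = #{v | φ v = none} + ∑ i, #{v | φ v = some i} := by
  rw [← card_univ, card_eq_sum_card_fiberwise (f := φ) (t := univ) fun _ _ => mem_univ _,
    Fintype.sum_option]

lemma SimpleGraph.Reachable.apply_eq_of_forall_adj {α : Type*} {G : SimpleGraph V} {f : V → α}
    (hf : ∀ v w, G.Adj v w → f v = f w) {v w : V} (h : G.Reachable v w) : f v = f w := by
  obtain ⟨p⟩ := h
  induction p with
  | nil => rfl
  | cons hadj _ ih => exact (hf _ _ hadj).trans ih

lemma COv_le_ncard {G : SimpleGraph V} {k : ℕ} {S : Set V} (hS : vertexDisconnects G k S) :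
    COv G k ≤ S.ncard :=
  Nat.sInf_le ⟨S, rfl, hS⟩

lemma exists_vertexDisconnects_ncard_eq_COv (G : SimpleGraph V) (k : ℕ) :
    ∃ S : Set V, S.ncard = COv G k ∧ vertexDisconnects G k S :=
  Nat.sInf_mem (s := {c | ∃ S : Set V, S.ncard = c ∧ vertexDisconnects G k S})
    ⟨_, Set.univ, rfl, fun v => absurd v.2 (by simp)⟩

lemma mem_of_vertexDisconnects [Finite V] {G : SimpleGraph V} {k : ℕ} {S : Set V}
    (hS : vertexDisconnects G k S) (hcard : S.ncard + k < Nat.card V) {u : V}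
    (hu : ∀ w, w ≠ u → G.Adj u w) : u ∈ S := by
  by_contra huS
  have hsupp : ((G.induce Sᶜ).connectedComponentMk ⟨u, huS⟩).supp = Set.univ := by
    refine Set.eq_univ_of_forall fun w => ?_
    by_cases hw : w = ⟨u, huS⟩
    · rw [hw]
      rfl
    · exact ConnectedComponent.sound (Adj.reachable (hu w fun h => hw (Subtype.ext h)).symm)
  have hsmall := hS ⟨u, huS⟩
  rw [hsupp, Set.ncard_univ, Nat.card_coe_set_eq] at hsmall
  have := Set.ncard_add_ncard_compl S
  omega

/-- The join of the complete graph on the vertices labelled `none` with the disjoint union of the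
complete graphs on the fibres `φ ⁻¹' {some i}`. -/
def joinCliques (φ : V → Option ι) : SimpleGraph V where
  Adj v w := v ≠ w ∧ (φ v = none ∨ φ w = none ∨ φ v = φ w)
  symm := ⟨fun _ _ h => ⟨h.1.symm, by rcases h.2 with h | h | h <;> simp [h]⟩⟩
  loopless := ⟨fun _ h => h.1 rfl⟩

section Counting

variable [Fintype V] [DecidableEq V] [DecidableEq ι] (φ : V → Option ι)

instance : DecidableRel (joinCliques φ).Adj := fun v w =>
  inferInstanceAs (Decidable (v ≠ w ∧ (φ v = none ∨ φ w = none ∨ φ v = φ w)))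

lemma joinCliques_degree_add_one (v : V) :
    (joinCliques φ).degree v + 1 = #{w | φ v = none ∨ φ w = none ∨ φ w = φ v} := by
  rw [← card_neighborFinset_eq_degree, ← card_insert_of_notMem (notMem_neighborFinset_self _ _)]
  congr 1
  ext w
  rw [mem_insert, mem_neighborFinset, mem_filter]
  by_cases hw : w = v
  · simp [hw]
  · simp [joinCliques, hw, Ne.symm hw, eq_comm]

theorem ncard_edgeSet_joinCliques [Fintype ι] :
    (joinCliques φ).edgeSet.ncard = #{v | φ v = none} * (Fintype.card V - #{v | φ v = none}) +
      (#{v | φ v = none}).choose 2 + ∑ i, (#{v | φ v = some i}).choose 2 := by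
  set s := #{v | φ v = none}
  set t := fun i => #{v | φ v = some i}
  have hcard : Fintype.card V = s + ∑ i, t i := card_eq_card_none_add_sum φ
  -- a cone vertex is adjacent to all others; a vertex of the `i`-th clique to `s + t i - 1`
  have hdeg : ∑ v, ((joinCliques φ).degree v + 1) = s * Fintype.card V + ∑ i, t i * (s + t i) := by
    rw [← Finset.sum_fiberwise univ φ, Fintype.sum_option]
    congr 1
    · refine sum_const_nat fun v hv => ?_
      rw [joinCliques_degree_add_one, (mem_filter.1 hv).2]
      simp
    · refine sum_congr rfl fun i _ => sum_const_nat fun v hv => ?_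
      rw [joinCliques_degree_add_one, (mem_filter.1 hv).2, ← card_union_of_disjoint]
      · congr 1
        ext w
        simp
      · simp +contextual [Finset.disjoint_left]
  have htwice := sum_degrees_eq_twice_card_edges (joinCliques φ)
  have hs := Nat.two_mul_choose_two_add_self s
  have ht : ∑ i, t i * t i = 2 * ∑ i, (t i).choose 2 + ∑ i, t i := by
    simp only [mul_sum, ← sum_add_distrib, Nat.two_mul_choose_two_add_self]
  have hsum : ∑ i, t i * (s + t i) = s * ∑ i, t i + ∑ i, t i * t i := by
    simp only [mul_sum, ← sum_add_distrib, mul_add, mul_comm]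
  rw [sum_add_distrib, htwice, hsum, ht, sum_const, card_univ, smul_eq_mul, mul_one, hcard] at hdeg
  change _ = _ + _ + ∑ i, (t i).choose 2
  rw [← coe_edgeFinset, Set.ncard_coe_finset, hcard, Nat.add_sub_cancel_left]
  nlinarith

end Counting

lemma vertexDisconnects_joinCliques [Fintype V] [DecidableEq ι] (φ : V → Option ι) {k : ℕ}
    (hφ : ∀ i, #{v | φ v = some i} ≤ k) :
    vertexDisconnects (joinCliques φ) k {v | φ v = none} := by
  intro v
  obtain ⟨i, hi⟩ := Option.ne_none_iff_exists'.1 v.2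
  set C := ((joinCliques φ).induce {v | φ v = none}ᶜ).connectedComponentMk v
  have hsub : Subtype.val '' C.supp ⊆ {w | φ w = some i} := by
    rintro _ ⟨w, hw, rfl⟩
    rw [← hi]
    refine (ConnectedComponent.exact hw).apply_eq_of_forall_adj
      (f := fun w : ↥{v | φ v = none}ᶜ => φ w) ?_
    rintro a b ⟨-, ha | hb | hab⟩
    exacts [absurd ha a.2, absurd hb b.2, hab]
  calc C.supp.ncard = (Subtype.val '' C.supp).ncard :=
        (Set.ncard_image_of_injective _ Subtype.val_injective).symm
    _ ≤ {w | φ w = some i}.ncard := Set.ncard_le_ncard hsub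
    _ ≤ k := (ncard_setOf_eq_card_filter _).trans_le (hφ i)

theorem COv_joinCliques [Fintype V] [DecidableEq ι] (φ : V → Option ι) {k : ℕ}
    (hφ : ∀ i, #{v | φ v = some i} ≤ k) (hnone : #{v | φ v = none} ≤ Fintype.card V - k) :
    COv (joinCliques φ) k = #{v | φ v = none} := by
  have hS := vertexDisconnects_joinCliques φ hφ
  rw [← ncard_setOf_eq_card_filter] at hnone ⊢
  refine le_antisymm (COv_le_ncard hS) ?_
  obtain ⟨T, hT, hTdis⟩ := exists_vertexDisconnects_ncard_eq_COv (joinCliques φ) k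
  rw [← hT]
  by_contra! hlt
  have hsub : {v | φ v = none} ⊆ T := fun u hu =>
    mem_of_vertexDisconnects hTdis (by rw [Nat.card_eq_fintype_card]; omega)
      fun _ hw => ⟨hw.symm, Or.inl hu⟩
  exact (Set.ncard_le_ncard hsub).not_gt hlt

open scoped Classical in
noncomputable def componentLabel (G : SimpleGraph V) (T : Set V) (v : V) :
    Option (G.induce Tᶜ).ConnectedComponent :=
  if h : v ∈ T then none else some ((G.induce Tᶜ).connectedComponentMk ⟨v, h⟩)

lemma componentLabel_eq_none_iff {G : SimpleGraph V} {T : Set V} {v : V} :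
    componentLabel G T v = none ↔ v ∈ T := by
  by_cases hv : v ∈ T <;> simp [componentLabel, hv]

lemma setOf_componentLabel_eq_some {G : SimpleGraph V} {T : Set V}
    (c : (G.induce Tᶜ).ConnectedComponent) :
    {v | componentLabel G T v = some c} = Subtype.val '' c.supp := by
  ext v
  by_cases hv : v ∈ T <;> simp [componentLabel, hv]

lemma le_joinCliques_componentLabel (G : SimpleGraph V) (T : Set V) :
    G ≤ joinCliques (componentLabel G T) := by
  intro v w hadj
  refine ⟨hadj.ne, ?_⟩
  by_cases hv : v ∈ T
  · simp [componentLabel, hv]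
  by_cases hw : w ∈ T
  · simp [componentLabel, hw]
  have : (G.induce Tᶜ).Reachable ⟨v, hv⟩ ⟨w, hw⟩ := Adj.reachable hadj
  simp [componentLabel, hv, hw, ConnectedComponent.sound this]

theorem ncard_edgeSet_le_of_vertexDisconnects [Fintype V] {G : SimpleGraph V} {k : ℕ} {T : Set V}
    (hT : vertexDisconnects G k T) :
    G.edgeSet.ncard ≤ T.ncard * (Fintype.card V - T.ncard) + T.ncard.choose 2 +
      packedEdges k (Fintype.card V - T.ncard) := by
  classical
  set φ := componentLabel G T
  have hnone : #{v | φ v = none} = T.ncard := by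
    simp only [← ncard_setOf_eq_card_filter, φ, componentLabel_eq_none_iff, Set.ofPred_mem_eq]
  have hsome : ∀ c, #{v | φ v = some c} ≤ k := by
    refine ConnectedComponent.ind fun v => ?_
    rw [← ncard_setOf_eq_card_filter, setOf_componentLabel_eq_some,
      Set.ncard_image_of_injective _ Subtype.val_injective]
    exact hT v
  have hsum : ∑ c, #{v | φ v = some c} = Fintype.card V - T.ncard := by
    rw [card_eq_card_none_add_sum φ, hnone, Nat.add_sub_cancel_left]
  calc G.edgeSet.ncard ≤ (joinCliques φ).edgeSet.ncard :=
        Set.ncard_le_ncard (edgeSet_mono (le_joinCliques_componentLabel G T))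
    _ = _ := ncard_edgeSet_joinCliques φ
    _ ≤ _ := by
      rw [hnone, ← hsum]
      gcongr
      exact sum_choose_two_le_packedEdges _ fun c _ => hsome c

lemma exists_labelling_of_card_eq [Fintype V] {κ p q k : ℕ} (hq : q ≤ k)
    (hV : Fintype.card V = κ + (p * k + q)) :
    ∃ φ : V → Option (Option (Fin p)), #{v | φ v = none} = κ ∧
      (∀ i, #{v | φ v = some i} ≤ k) ∧
      ∑ i, (#{v | φ v = some i}).choose 2 = p * k.choose 2 + q.choose 2 := by
  let label : Fin κ ⊕ (Fin p × Fin k ⊕ Fin q) → Option (Option (Fin p)) :=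
    Sum.elim (fun _ => none) (Sum.elim (fun x => some (some x.1)) fun _ => some none)
  let e : V ≃ Fin κ ⊕ (Fin p × Fin k ⊕ Fin q) := Fintype.equivOfCardEq (by simp [hV])
  have hfiber : ∀ j, #{v | (label ∘ e) v = j} = ∑ w, if label w = j then 1 else 0 := fun j => by
    rw [card_filter]
    exact e.sum_comp (fun w => if label w = j then 1 else 0)
  refine ⟨label ∘ e, ?_, ?_, ?_⟩
  all_goals simp only [hfiber, Fintype.sum_sum_type, Fintype.sum_prod_type]
  · simp [label]
  · rintro (_ | i) <;> simp [label, hq]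
  · simp [label, Fintype.sum_option, add_comm]

theorem maxEdges_COv_eq_general (n κ p' q' : ℕ) (k : ℕ) (hκ : κ ≤ n - k)
    (hn : n - κ = p' * k + q') (hq : q' < k) :
    IsGreatest {m | ∃ G : SimpleGraph (Fin n), G.edgeSet.ncard = m ∧ COv G k = κ}
      (κ * (n - κ) + κ.choose 2 + p' * k.choose 2 + q'.choose 2) := by
  refine ⟨?_, ?_⟩
  · obtain ⟨φ, hnone, hsome, hsum⟩ :=
      exists_labelling_of_card_eq (V := Fin n) (κ := κ) hq.le
        (by rw [Fintype.card_fin, ← hn]; omega)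
    refine ⟨joinCliques φ, ?_, ?_⟩
    · rw [ncard_edgeSet_joinCliques, hnone, hsum, Fintype.card_fin, ← add_assoc]
    · rw [COv_joinCliques φ hsome (by rwa [hnone, Fintype.card_fin]), hnone]
  · rintro m ⟨G, rfl, hG⟩
    obtain ⟨T, hT, hTdis⟩ := exists_vertexDisconnects_ncard_eq_COv G k
    have hbound := ncard_edgeSet_le_of_vertexDisconnects hTdis
    have hpacked : packedEdges k (n - κ) = p' * k.choose 2 + q'.choose 2 :=
      hn ▸ packedEdges_mul_add hq
    rwa [hT, hG, Fintype.card_fin, hpacked, ← add_assoc] at hbound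

theorem maxEdges_COv_eq (n κ p' q' : ℕ) (r : ℝ) (hr0 : 0 < r) (hr1 : r < 1)
    (k : ℕ) (hk : k = ⌊r * n⌋₊) (hk1 : 1 ≤ k) (hκ : κ ≤ n - k)
    (hn : n - κ = p' * k + q') (hq : q' < k) :
    IsGreatest {m | ∃ G : SimpleGraph (Fin n), G.edgeSet.ncard = m ∧ COv G k = κ}
      (κ * (n - κ) + κ.choose 2 + p' * k.choose 2 + q'.choose 2) :=
  maxEdges_COv_eq_general n κ p' q' k hκ hn hq
end

section
/- Fix $n$ and $0 < r < 1$ with $k = \lfloor rn \rfloor \geq 1$, and write $n = pk + q$ with $0 \leq q < k$. For every graph $G$ on $n$ vertices, $CO_e^r(G) \leq \binom{n}{2} - p\binom{k}{2} - \binom{q}{2}$; that is, the complete graph $K_n$ maximizes $CO_e^r$ over all graphs on $n$ vertices, with value $\binom{n}{2} - p\binom{k}{2} - \binom{q}{2}$. -/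
/-!
Fix a partition of the vertices into `p` blocks of size `k` and one of size `q`, and let `H`
be the disjoint union of cliques on the blocks. Deleting from `G` its edges outside `H` leaves
components inside blocks, so `COe G k ≤ |E(G) \ E(H)| ≤ C(n,2) - p C(k,2) - C(q,2)`.
Conversely, a graph all of whose components have at most `k` vertices has at most
`∑ C(|C|,2)` edges, and for component sizes bounded by `k` and summing to `p k + q` this is at
most `p C(k,2) + C(q,2)`, because `∑ |C|^2` is maximised by filling components greedily. So
every edge set whose deletion from `K_n` leaves a failure state has at least
`C(n,2) - p C(k,2) - C(q,2)` edges.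
-/

open SimpleGraph

open Finset

theorem Nat.two_mul_mul_choose_two_add_choose_two (p k q : ℕ) :
    2 * (p * k.choose 2 + q.choose 2) + (p * k + q) = p * k ^ 2 + q ^ 2 := by
  have h (t : ℕ) : 2 * t.choose 2 + t = t ^ 2 := by
    rw [mul_comm, Nat.choose_two_right, Nat.div_two_mul_two_of_even (Nat.even_mul_pred_self t)]
    cases t <;> simp [sq, Nat.mul_succ]
  calc 2 * (p * k.choose 2 + q.choose 2) + (p * k + q)
      = p * (2 * k.choose 2 + k) + (2 * q.choose 2 + q) := by ring
    _ = p * k ^ 2 + q ^ 2 := by rw [h, h]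

theorem Finset.sum_sq_le_of_le_of_sum_eq {ι : Type*} {s : Finset ι} {t : ι → ℕ} {k : ℕ}
    (hle : ∀ i ∈ s, t i ≤ k) {p q : ℕ} (hsum : ∑ i ∈ s, t i = p * k + q) :
    ∑ i ∈ s, t i ^ 2 ≤ p * k ^ 2 + q ^ 2 := by
  classical
  induction s using Finset.induction_on generalizing p q with
  | empty => simp
  | insert a s ha ih =>
    rw [sum_insert ha] at hsum ⊢
    have hle' : ∀ i ∈ s, t i ≤ k := fun i hi => hle i (mem_insert_of_mem hi)
    obtain ⟨z, hz⟩ := Nat.exists_eq_add_of_le (hle a (mem_insert_self a s))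
    rcases le_or_gt (t a) q with hq | hq
    · obtain ⟨x, rfl⟩ := Nat.exists_eq_add_of_le hq
      have := ih hle' (p := p) (q := x) (by omega)
      nlinarith
    · -- Charge `t a` to a full block: the rest splits as `p - 1` blocks and `q + (k - t a)`, and
      -- `t a ^ 2 + (q + (k - t a)) ^ 2 ≤ k ^ 2 + q ^ 2` since `q < t a ≤ k`.
      obtain ⟨x, hx⟩ := Nat.exists_eq_add_of_lt hq
      obtain ⟨p, rfl⟩ : ∃ p', p = p' + 1 :=
        Nat.exists_eq_add_one.2 (Nat.pos_of_ne_zero (by rintro rfl; omega))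
      have := ih hle' (p := p) (q := q + z) (by subst hz; linarith)
      subst hz
      nlinarith

theorem Finset.sum_card_fiber_eq_sum_sq {V α : Type*} [Fintype V] [DecidableEq α] {f : V → α}
    {s : Finset α} (hs : ∀ v, f v ∈ s) :
    ∑ v, #{w | f w = f v} = ∑ j ∈ s, #{w | f w = j} ^ 2 := by
  rw [← sum_fiberwise_of_maps_to fun v _ => hs v]
  refine sum_congr rfl fun j _ => ?_
  rw [sum_congr rfl fun v hv => by rw [(mem_filter.1 hv).2], sum_const, smul_eq_mul, sq]

theorem failureState.anti {V : Type*} [Finite V] {G H : SimpleGraph V} {k : ℕ} (hGH : G ≤ H)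
    (hH : failureState H k) : failureState G k := fun v =>
  (Set.ncard_le_ncard fun w hw => by
      rw [ConnectedComponent.mem_supp_iff, ConnectedComponent.eq] at hw ⊢
      exact hw.mono hGH).trans (hH v)

namespace SimpleGraph

variable {V α : Type*}

def fiberGraph (f : V → α) : SimpleGraph V where
  Adj a b := a ≠ b ∧ f a = f b
  symm := ⟨fun _ _ h => ⟨h.1.symm, h.2.symm⟩⟩
  loopless := ⟨fun _ h => h.1 rfl⟩

@[simp]
theorem fiberGraph_adj {f : V → α} {a b : V} :
    (fiberGraph f).Adj a b ↔ a ≠ b ∧ f a = f b :=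
  Iff.rfl

instance [DecidableEq V] [DecidableEq α] {f : V → α} : DecidableRel (fiberGraph f).Adj :=
  fun _ _ => decidable_of_iff' _ fiberGraph_adj

theorem Reachable.apply_eq_of_le_fiberGraph {G : SimpleGraph V} {f : V → α}
    (hG : G ≤ fiberGraph f) {u v : V} (h : G.Reachable u v) : f u = f v := by
  obtain ⟨w⟩ := h
  induction w with
  | nil => rfl
  | cons hadj _ ih => exact (fiberGraph_adj.1 (hG hadj)).2.trans ih

theorem failureState_fiberGraph [Fintype V] [DecidableEq α] {f : V → α} {k : ℕ}
    (hf : ∀ v, #{w | f w = f v} ≤ k) : failureState (fiberGraph f) k := fun v =>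
  calc ((fiberGraph f).connectedComponentMk v).supp.ncard ≤ {w | f w = f v}.ncard :=
        Set.ncard_le_ncard fun w hw =>
          Reachable.apply_eq_of_le_fiberGraph le_rfl (ConnectedComponent.exact hw)
    _ ≤ k := by rw [Set.ncard_eq_toFinset_card', Set.toFinset_ofPred]; exact hf v

theorem degree_fiberGraph_add_one [Fintype V] [DecidableEq V] [DecidableEq α] (f : V → α)
    (v : V) : (fiberGraph f).degree v + 1 = #{w | f w = f v} := by
  have : (fiberGraph f).neighborFinset v = ({w | f w = f v} : Finset V).erase v := by
    ext w
    simp [eq_comm, and_comm]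
  rw [← card_neighborFinset_eq_degree, this, card_erase_add_one (by simp)]

theorem two_mul_ncard_edgeSet_fiberGraph_add_card [Fintype V] [DecidableEq α] (f : V → α)
    {s : Finset α} (hs : ∀ v, f v ∈ s) :
    2 * (fiberGraph f).edgeSet.ncard + Fintype.card V = ∑ j ∈ s, #{v | f v = j} ^ 2 := by
  classical
  calc 2 * (fiberGraph f).edgeSet.ncard + Fintype.card V
      = ∑ v, ((fiberGraph f).degree v + 1) := by
        rw [sum_add_distrib, sum_degrees_eq_twice_card_edges, ← coe_edgeFinset,
          Set.ncard_coe_finset, sum_const, card_univ, smul_eq_mul, mul_one]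
    _ = ∑ v, #{w | f w = f v} := sum_congr rfl fun v _ => degree_fiberGraph_add_one f v
    _ = ∑ j ∈ s, #{v | f v = j} ^ 2 := sum_card_fiber_eq_sum_sq hs

theorem ncard_edgeSet_fiberGraph_le [Fintype V] [DecidableEq α] {f : V → α} {k p q : ℕ}
    (hf : ∀ v, #{w | f w = f v} ≤ k) (hV : Fintype.card V = p * k + q) :
    (fiberGraph f).edgeSet.ncard ≤ p * k.choose 2 + q.choose 2 := by
  have hsum := two_mul_ncard_edgeSet_fiberGraph_add_card f fun v => mem_image_of_mem f (mem_univ v)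
  have hsq : ∑ j ∈ univ.image f, #{v | f v = j} ^ 2 ≤ p * k ^ 2 + q ^ 2 := by
    refine sum_sq_le_of_le_of_sum_eq (fun j hj => ?_) ?_
    · obtain ⟨v, -, rfl⟩ := mem_image.1 hj
      exact hf v
    · rw [← card_eq_sum_card_image, card_univ, hV]
  have := Nat.two_mul_mul_choose_two_add_choose_two p k q
  omega

theorem ncard_edgeSet_le_of_failureState [Fintype V] {G : SimpleGraph V} {k p q : ℕ}
    (hG : failureState G k) (hV : Fintype.card V = p * k + q) :
    G.edgeSet.ncard ≤ p * k.choose 2 + q.choose 2 := by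
  classical
  have hle : G ≤ fiberGraph G.connectedComponentMk := fun _ _ h =>
    fiberGraph_adj.2 ⟨h.ne, ConnectedComponent.eq.2 h.reachable⟩
  refine (Set.ncard_le_ncard (edgeSet_mono hle)).trans
    (ncard_edgeSet_fiberGraph_le (fun v => ?_) hV)
  simpa [Set.ncard_eq_toFinset_card', ConnectedComponent.mem_supp_iff] using hG v

end SimpleGraph

theorem failureState_bot {V : Type*} [Finite V] {k : ℕ} (hk : 0 < k) :
    failureState (⊥ : SimpleGraph V) k := by
  classical
  have := Fintype.ofFinite V
  exact (failureState_fiberGraph (f := id) fun v =>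
    (card_le_one.2 fun _ ha _ hb => by simp_all).trans hk).anti bot_le

theorem COe_le_ncard_edgeSet_sdiff {V : Type*} [Finite V] {G H : SimpleGraph V} {k : ℕ}
    (hH : failureState H k) : COe G k ≤ (G.edgeSet \ H.edgeSet).ncard :=
  Nat.sInf_le ⟨_, Set.sdiff_subset, rfl, hH.anti fun _ _ h => by
    simp only [deleteEdges_adj, Set.mem_sdiff, mem_edgeSet, not_and, not_not] at h
    exact h.2 h.1⟩

theorem ncard_edgeSet_sub_le_COe {V : Type*} [Fintype V] {G : SimpleGraph V} {k p q : ℕ}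
    (hk : 0 < k) (hV : Fintype.card V = p * k + q) :
    G.edgeSet.ncard - (p * k.choose 2 + q.choose 2) ≤ COe G k := by
  have hne :
      {c | ∃ E' ⊆ G.edgeSet, E'.ncard = c ∧ failureState (G.deleteEdges E') k}.Nonempty :=
    ⟨_, G.edgeSet, subset_rfl, rfl, by
      rw [deleteEdges_edgeSet, sdiff_self]
      exact failureState_bot hk⟩
  obtain ⟨E', hE', hcard, hfail⟩ := Nat.sInf_mem hne
  have := ncard_edgeSet_le_of_failureState hfail hV
  rw [edgeSet_deleteEdges, Set.ncard_sdiff hE'] at this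
  rw [COe, ← hcard]
  omega

theorem Fin.card_filter_val_div_eq {n k : ℕ} (hk : 0 < k) (j : ℕ) :
    #{v : Fin n | (v : ℕ) / k = j} = min ((j + 1) * k) n - j * k := by
  have : ({x ∈ Iio n | x / k = j} : Finset ℕ) = Ico (j * k) (min ((j + 1) * k) n) := by
    ext x
    simp only [mem_filter, mem_Iio, mem_Ico, lt_min_iff, Nat.div_eq_iff hk, add_one_mul]
    omega
  rw [← Nat.card_Ico, ← this, ← Fin.map_valEmbedding_univ, filter_map, card_map]
  rfl

section Blocks

variable {n k p q : ℕ}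

theorem Fin.card_filter_val_div_le (hk : 0 < k) (j : ℕ) :
    #{v : Fin n | (v : ℕ) / k = j} ≤ k := by
  rw [Fin.card_filter_val_div_eq hk, add_one_mul]
  omega

theorem ncard_edgeSet_fiberGraph_val_div (hn : n = p * k + q) (hq : q < k) :
    (fiberGraph fun v : Fin n => (v : ℕ) / k).edgeSet.ncard = p * k.choose 2 + q.choose 2 := by
  have hk : 0 < k := q.zero_le.trans_lt hq
  have hfull (j : ℕ) (hj : j < p) : #{v : Fin n | (v : ℕ) / k = j} = k := by
    have : (j + 1) * k ≤ p * k := Nat.mul_le_mul_right k hj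
    rw [add_one_mul] at this
    rw [Fin.card_filter_val_div_eq hk, add_one_mul]
    omega
  have hlast : #{v : Fin n | (v : ℕ) / k = p} = q := by
    rw [Fin.card_filter_val_div_eq hk, add_one_mul]
    omega
  have hsum := two_mul_ncard_edgeSet_fiberGraph_add_card (fun v : Fin n => (v : ℕ) / k)
    (s := range (p + 1)) fun v => by
      rw [mem_range, Nat.div_lt_iff_lt_mul hk]
      linarith [v.isLt]
  rw [sum_range_succ, sum_congr rfl fun j hj => by rw [hfull j (mem_range.1 hj)], hlast,
    sum_const, card_range, smul_eq_mul, Fintype.card_fin] at hsum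
  have := Nat.two_mul_mul_choose_two_add_choose_two p k q
  omega

end Blocks

theorem COe_max_complete_general (n p q : ℕ)
    (k : ℕ) (hn : n = p * k + q) (hq : q < k) :
    (∀ G : SimpleGraph (Fin n),
        COe G k ≤ n.choose 2 - p * k.choose 2 - q.choose 2) ∧
      COe (⊤ : SimpleGraph (Fin n)) k =
        n.choose 2 - p * k.choose 2 - q.choose 2 := by
  have hk : 0 < k := q.zero_le.trans_lt hq
  set H := fiberGraph fun v : Fin n => (v : ℕ) / k
  have hH : failureState H k := failureState_fiberGraph fun v => Fin.card_filter_val_div_le hk _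
  have htop : (⊤ : SimpleGraph (Fin n)).edgeSet.ncard = n.choose 2 := by
    rw [← coe_edgeFinset, Set.ncard_coe_finset, card_edgeFinset_top_eq_card_choose_two,
      Fintype.card_fin]
  have upper (G : SimpleGraph (Fin n)) : COe G k ≤ n.choose 2 - p * k.choose 2 - q.choose 2 :=
    calc COe G k ≤ (G.edgeSet \ H.edgeSet).ncard := COe_le_ncard_edgeSet_sdiff hH
      _ ≤ ((⊤ : SimpleGraph (Fin n)).edgeSet \ H.edgeSet).ncard :=
        Set.ncard_le_ncard (Set.sdiff_subset_sdiff_left (edgeSet_mono le_top))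
      _ = n.choose 2 - p * k.choose 2 - q.choose 2 := by
        rw [Set.ncard_sdiff (edgeSet_mono le_top), htop, ncard_edgeSet_fiberGraph_val_div hn hq,
          Nat.sub_sub]
  refine ⟨upper, (upper ⊤).antisymm ?_⟩
  have := ncard_edgeSet_sub_le_COe (G := ⊤) hk ((Fintype.card_fin n).trans hn)
  rwa [htop, ← Nat.sub_sub] at this

theorem COe_max_complete (n p q : ℕ) (r : ℝ) (hr0 : 0 < r) (hr1 : r < 1)
    (k : ℕ) (hk : k = ⌊r * n⌋₊) (hk1 : 1 ≤ k) (hn : n = p * k + q) (hq : q < k) :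
    (∀ G : SimpleGraph (Fin n),
        COe G k ≤ n.choose 2 - p * k.choose 2 - q.choose 2) ∧
      COe (⊤ : SimpleGraph (Fin n)) k =
        n.choose 2 - p * k.choose 2 - q.choose 2 :=
  COe_max_complete_general n p q k hn hq
end
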